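/- Let Γ be a nonempty parameter-bounded family of Hénon-form maps. Then there exists R₀ > 1 such that for every R ≥ R₀ the following holds: for every (x,y) ∈ ℂ² and every sequence γ = (γ_j)_{j∈ℤ} with all γ_j ∈ Γ, there exists n₀ ∈ ℕ such that for every n ≥ n₀ one has γ_{n−1}∘⋯∘γ₀(x,y) ∈ W_R⁺ and γ_{−n}⁻¹∘⋯∘γ_{−1}⁻¹(x,y) ∈ W_R⁻, where W_R⁺ = ℂ² ∖ closure(V_R⁻) and W_R⁻ = ℂ² ∖ closure(V_R⁺). -/

import Mathlib

open Complex Filter Set Topology MeasureTheory Bornology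

noncomputable section

/-- A Hénon-form map `f(x,y) = (y + a, p(y) - δ x)` with `δ ≠ 0` and `deg p ≥ 2`. -/
structure HenonMap : Type where
  a : ℂ
  δ : ℂ
  p : Polynomial ℂ
  hδ : δ ≠ 0
  hdeg : 2 ≤ p.natDegree

namespace HenonMap

/-- The map itself. -/
def toFun (f : HenonMap) (z : ℂ × ℂ) : ℂ × ℂ :=
  (z.2 + f.a, f.p.eval z.2 - f.δ * z.1)

/-- The inverse map `f⁻¹(x,y) = (δ⁻¹ (p(x - a) - y), x - a)`. -/
def invFun (f : HenonMap) (z : ℂ × ℂ) : ℂ × ℂ :=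
  (f.δ⁻¹ * (f.p.eval (z.1 - f.a) - z.2), z.1 - f.a)

end HenonMap

/-- `V_R⁺ = {(x,y) : max(R,|x|) < |y|}`. -/
def VPlus (R : ℝ) : Set (ℂ × ℂ) := {z | max R (‖z.1‖) < ‖z.2‖}

/-- `V_R⁻ = {(x,y) : max(R,|y|) < |x|}`. -/
def VMinus (R : ℝ) : Set (ℂ × ℂ) := {z | max R (‖z.2‖) < ‖z.1‖}

/-- `D_R = {(x,y) : max(|x|,|y|) < R}`. -/
def DDisk (R : ℝ) : Set (ℂ × ℂ) := {z | max (‖z.1‖) (‖z.2‖) < R}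

/-- Condition (A) for `(R, ρ)`. -/
def CondA (f : HenonMap) (R ρ : ℝ) : Prop :=
  (∀ z ∈ closure (VPlus R),
    f.toFun z ∈ VPlus R ∧ ρ * ‖z.2‖ < ‖(f.toFun z).2‖) ∧
  (∀ z ∈ closure (VMinus R),
    f.invFun z ∈ VMinus R ∧ ρ * ‖z.1‖ < ‖(f.invFun z).1‖)

/-- A parameter-bounded family of Hénon-form maps. -/
def ParamBounded (Γ : Set HenonMap) : Prop :=
  ∃ (D : ℕ) (A d₀ Δ m M : ℝ),
    2 ≤ D ∧ 0 ≤ A ∧ 0 < d₀ ∧ d₀ ≤ Δ ∧ 0 < m ∧ m ≤ M ∧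
    ∀ f ∈ Γ,
      f.p.natDegree ≤ D ∧ ‖f.a‖ ≤ A ∧
      d₀ ≤ ‖f.δ‖ ∧ ‖f.δ‖ ≤ Δ ∧
      (∀ i : ℕ, ‖f.p.coeff i‖ ≤ M) ∧
      m ≤ ‖f.p.leadingCoeff‖

/-- Forward composition: `fwd γ n = γ_{n-1} ∘ ⋯ ∘ γ₀`. -/
def fwd (γ : ℤ → HenonMap) : ℕ → (ℂ × ℂ) → ℂ × ℂ
  | 0 => id
  | n + 1 => fun z => (γ (n : ℤ)).toFun (fwd γ n z)

/-- Backward composition: `bwd γ n = γ_{-n}⁻¹ ∘ ⋯ ∘ γ_{-1}⁻¹`. -/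
def bwd (γ : ℤ → HenonMap) : ℕ → (ℂ × ℂ) → ℂ × ℂ
  | 0 => id
  | n + 1 => fun z => (γ (-((n : ℤ) + 1))).invFun (bwd γ n z)

/-- `K_γ⁺` : points with bounded forward orbit. -/
def KPlus (γ : ℤ → HenonMap) : Set (ℂ × ℂ) :=
  {z | IsBounded (Set.range fun n : ℕ => fwd γ n z)}

/-- `K_γ⁻` : points with bounded backward orbit. -/
def KMinus (γ : ℤ → HenonMap) : Set (ℂ × ℂ) :=
  {z | IsBounded (Set.range fun n : ℕ => bwd γ n z)}

/-- `I_γ⁺` : points whose forward orbit tends to infinity in norm. -/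
def IPlus (γ : ℤ → HenonMap) : Set (ℂ × ℂ) :=
  {z | Tendsto (fun n : ℕ => ‖fwd γ n z‖) atTop atTop}

/-- `I_γ⁻` : points whose backward orbit tends to infinity in norm. -/
def IMinus (γ : ℤ → HenonMap) : Set (ℂ × ℂ) :=
  {z | Tendsto (fun n : ℕ => ‖bwd γ n z‖) atTop atTop}

/-- The iterated shift: `(σⁿ γ)_j = γ_{j+n}`. -/
def shiftIter (γ : ℤ → HenonMap) (n : ℕ) : ℤ → HenonMap := fun j => γ (j + n)

/-- `log⁺ t = max (log t) 0`. -/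
def logPlus (t : ℝ) : ℝ := max (Real.log t) 0

/-- `G_{γ,n}⁺(z) = (deg γ_{n-1} ⋯ deg γ₀)⁻¹ log⁺ ‖γ_{n-1} ∘ ⋯ ∘ γ₀ (z)‖`. -/
def GPlusN (γ : ℤ → HenonMap) (n : ℕ) (z : ℂ × ℂ) : ℝ :=
  (∏ j ∈ Finset.range n, ((γ (j : ℤ)).p.natDegree : ℝ))⁻¹ * logPlus ‖fwd γ n z‖

/-- `G_{γ,n}⁻(z) = (deg γ_{-1} ⋯ deg γ_{-n})⁻¹ log⁺ ‖γ_{-n}⁻¹ ∘ ⋯ ∘ γ_{-1}⁻¹ (z)‖`. -/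
def GMinusN (γ : ℤ → HenonMap) (n : ℕ) (z : ℂ × ℂ) : ℝ :=
  (∏ j ∈ Finset.range n, ((γ (-((j : ℤ) + 1))).p.natDegree : ℝ))⁻¹ * logPlus ‖bwd γ n z‖

/-!
For `R` large, uniformly over a parameter-bounded family, the polynomial term dominates: each map
sends `closure V_R⁺` into `V_R⁺` at least doubling `|y|`, and each inverse sends `closure V_R⁻`
into `V_R⁻` at least doubling `|x|`. Hence if the forward orbit of `z` lies in `closure V_R⁻` at
time `n`, pulling back shows it did so at all earlier times, with `|z.1| ≥ 2ⁿ R`; this bounds `n`.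
The backward orbit is handled symmetrically with `V_R⁺`.
-/

theorem eventually_notMem_of_expanding {α : Type*} {S : Set α} {N : α → ℝ} {w : ℕ → α}
    {ρ R : ℝ} (hρ : 1 < ρ) (hR : 0 < R) (hS : ∀ x ∈ S, R ≤ N x)
    (hstep : ∀ n, w (n + 1) ∈ S → w n ∈ S ∧ ρ * N (w (n + 1)) ≤ N (w n)) :
    ∀ᶠ n in atTop, w n ∉ S := by
  have hpull : ∀ n, w n ∈ S → ρ ^ n * N (w n) ≤ N (w 0) := by
    intro n
    induction n with
    | zero => simp
    | succ n ih =>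
      intro hmem
      obtain ⟨hmem', hle⟩ := hstep n hmem
      calc ρ ^ (n + 1) * N (w (n + 1)) = ρ ^ n * (ρ * N (w (n + 1))) := by ring
        _ ≤ ρ ^ n * N (w n) := by gcongr
        _ ≤ N (w 0) := ih hmem'
  obtain ⟨n₀, hn₀⟩ := pow_unbounded_of_one_lt (N (w 0) / R) hρ
  filter_upwards [eventually_ge_atTop n₀] with n hn hmem
  have : ρ ^ n₀ * R ≤ ρ ^ n * N (w n) :=
    mul_le_mul (pow_le_pow_right₀ hρ.le hn) (hS _ hmem) hR.le (by positivity)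
  rw [div_lt_iff₀ hR] at hn₀
  linarith [hpull n hmem]

namespace Polynomial

variable {𝕜 : Type*} [NormedField 𝕜]

theorem norm_leadingCoeff_mul_pow_sub_le_norm_eval (p : 𝕜[X]) {M : ℝ}
    (hM : ∀ i < p.natDegree, ‖p.coeff i‖ ≤ M) {y : 𝕜} (hy : 1 ≤ ‖y‖) :
    ‖p.leadingCoeff‖ * ‖y‖ ^ p.natDegree - p.natDegree * M * ‖y‖ ^ (p.natDegree - 1)
      ≤ ‖p.eval y‖ := by
  set d := p.natDegree
  have heval : ∑ i ∈ Finset.range d, p.coeff i * y ^ i + p.leadingCoeff * y ^ d = p.eval y := by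
    rw [eval_eq_sum_range, Finset.sum_range_succ, coeff_natDegree]
  have htail : ‖∑ i ∈ Finset.range d, p.coeff i * y ^ i‖ ≤ d * M * ‖y‖ ^ (d - 1) := by
    calc ‖∑ i ∈ Finset.range d, p.coeff i * y ^ i‖
        ≤ ∑ i ∈ Finset.range d, ‖p.coeff i‖ * ‖y‖ ^ i := by
          simpa only [norm_mul, norm_pow] using
            norm_sum_le (Finset.range d) fun i => p.coeff i * y ^ i
      _ ≤ ∑ _i ∈ Finset.range d, M * ‖y‖ ^ (d - 1) := by
          refine Finset.sum_le_sum fun i hi => ?_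
          rw [Finset.mem_range] at hi
          exact mul_le_mul (hM i hi) (pow_le_pow_right₀ hy (by omega)) (by positivity)
            ((norm_nonneg _).trans (hM i hi))
      _ = d * M * ‖y‖ ^ (d - 1) := by simp [mul_assoc]
  have := norm_sub_norm_le (p.leadingCoeff * y ^ d) (-∑ i ∈ Finset.range d, p.coeff i * y ^ i)
  rw [norm_neg, sub_neg_eq_add, add_comm, heval, norm_mul, norm_pow] at this
  linarith

theorem mul_norm_le_norm_eval (p : 𝕜[X]) {D : ℕ} {m M K : ℝ} (hdeg : 2 ≤ p.natDegree)
    (hD : p.natDegree ≤ D) (hm : m ≤ ‖p.leadingCoeff‖) (hM : ∀ i, ‖p.coeff i‖ ≤ M)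
    {y : 𝕜} (hy : 1 ≤ ‖y‖) (hmy : |K| + D * M ≤ m * ‖y‖) :
    K * ‖y‖ ≤ ‖p.eval y‖ := by
  set t := ‖y‖
  set d := p.natDegree
  have hM0 : 0 ≤ M := (norm_nonneg _).trans (hM 0)
  have hdM : d * M ≤ D * M := by gcongr
  have hpow : t ≤ t ^ (d - 1) := le_self_pow₀ hy (by omega)
  have hsplit : t ^ d = t ^ (d - 1) * t := by rw [← pow_succ]; congr 1; omega
  have hlow := p.norm_leadingCoeff_mul_pow_sub_le_norm_eval (fun i _ => hM i) hy
  calc K * t ≤ |K| * t := by gcongr; exact le_abs_self K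
    _ ≤ |K| * t ^ (d - 1) := by gcongr
    _ ≤ (‖p.leadingCoeff‖ * t - d * M) * t ^ (d - 1) := by gcongr; nlinarith
    _ = ‖p.leadingCoeff‖ * t ^ d - d * M * t ^ (d - 1) := by rw [hsplit]; ring
    _ ≤ ‖p.eval y‖ := hlow

end Polynomial

theorem ParamBounded.exists_mul_norm_le_norm_eval {Γ : Set HenonMap} (hΓ : ParamBounded Γ)
    (K : ℝ) : ∃ r, ∀ f ∈ Γ, ∀ y : ℂ, r ≤ ‖y‖ → K * ‖y‖ ≤ ‖f.p.eval y‖ := by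
  obtain ⟨D, _, _, _, m, M, -, -, -, -, hm, -, hbound⟩ := hΓ
  refine ⟨max 1 ((|K| + D * M) / m), fun f hf y hy => ?_⟩
  obtain ⟨hD, -, -, -, hM, hlead⟩ := hbound f hf
  rw [max_le_iff, div_le_iff₀ hm] at hy
  exact f.p.mul_norm_le_norm_eval f.hdeg hD hlead hM hy.1 (by linarith)

theorem closure_VPlus_subset (R : ℝ) : closure (VPlus R) ⊆ {z | max R ‖z.1‖ ≤ ‖z.2‖} :=
  closure_minimal (fun _ (hz : max R _ < _) => hz.le) (isClosed_le (by fun_prop) (by fun_prop))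

theorem closure_VMinus_subset (R : ℝ) : closure (VMinus R) ⊆ {z | max R ‖z.2‖ ≤ ‖z.1‖} :=
  closure_minimal (fun _ (hz : max R _ < _) => hz.le) (isClosed_le (by fun_prop) (by fun_prop))

namespace HenonMap

variable (f : HenonMap)

@[simp]
theorem invFun_toFun (z : ℂ × ℂ) : f.invFun (f.toFun z) = z := by
  ext <;> simp [toFun, invFun, f.hδ]

@[simp]
theorem toFun_invFun (z : ℂ × ℂ) : f.toFun (f.invFun z) = z := by
  ext <;> simp [toFun, invFun, f.hδ]

variable {f} {r R : ℝ}
  (hgrowth : ∀ y : ℂ, r ≤ ‖y‖ → 4 * (‖f.δ‖ + 1) * ‖y‖ ≤ ‖f.p.eval y‖)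
include hgrowth

theorem toFun_mem_VPlus (hrR : r ≤ R) (haR : ‖f.a‖ < R) {z : ℂ × ℂ}
    (hz : max R ‖z.1‖ ≤ ‖z.2‖) : f.toFun z ∈ VPlus R ∧ 2 * ‖z.2‖ < ‖(f.toFun z).2‖ := by
  rw [max_le_iff] at hz
  have hp := hgrowth z.2 (hrR.trans hz.1)
  have hδx : ‖f.δ * z.1‖ ≤ ‖f.δ‖ * ‖z.2‖ := by rw [norm_mul]; gcongr; exact hz.2
  have hy : ‖f.p.eval z.2‖ - ‖f.δ * z.1‖ ≤ ‖(f.toFun z).2‖ := norm_sub_norm_le _ _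
  have hx : ‖(f.toFun z).1‖ ≤ ‖z.2‖ + ‖f.a‖ := norm_add_le _ _
  have : 0 ≤ ‖f.δ‖ * ‖z.2‖ := by positivity
  refine ⟨show max R ‖(f.toFun z).1‖ < _ from max_lt ?_ ?_, ?_⟩ <;> linarith [norm_nonneg f.a]

theorem invFun_mem_VMinus (hR : 0 < R) (hrR : 2 * r ≤ R) (haR : 2 * ‖f.a‖ ≤ R) {z : ℂ × ℂ}
    (hz : max R ‖z.2‖ ≤ ‖z.1‖) : f.invFun z ∈ VMinus R ∧ 2 * ‖z.1‖ < ‖(f.invFun z).1‖ := by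
  rw [max_le_iff] at hz
  set u := z.1 - f.a
  have hu : ‖z.1‖ - ‖f.a‖ ≤ ‖u‖ := norm_sub_norm_le _ _
  have hu' : ‖u‖ ≤ ‖z.1‖ + ‖f.a‖ := norm_sub_le _ _
  have hp := hgrowth u (by linarith)
  have hw : ‖f.p.eval u‖ - ‖z.2‖ ≤ ‖f.p.eval u - z.2‖ := norm_sub_norm_le _ _
  have hδ : 0 < ‖f.δ‖ := norm_pos_iff.mpr f.hδ
  have hx : 2 * ‖z.1‖ < ‖(f.invFun z).1‖ := by
    change 2 * ‖z.1‖ < ‖f.δ⁻¹ * (f.p.eval u - z.2)‖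
    rw [norm_mul, norm_inv, inv_mul_eq_div, lt_div_iff₀ hδ]
    nlinarith
  exact ⟨show max R ‖u‖ < _ from (max_le (by linarith) (by linarith)).trans_lt hx, hx⟩

theorem condA_two (hR : 0 < R) (hrR : 2 * r ≤ R) (haR : 2 * ‖f.a‖ ≤ R) : CondA f R 2 :=
  ⟨fun _ hz => toFun_mem_VPlus hgrowth (by linarith) (by linarith [norm_nonneg f.a])
      (closure_VPlus_subset R hz),
    fun _ hz => invFun_mem_VMinus hgrowth hR hrR haR (closure_VMinus_subset R hz)⟩

end HenonMap

theorem ParamBounded.eventually_condA {Γ : Set HenonMap} (hΓ : ParamBounded Γ) :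
    ∀ᶠ R in atTop, ∀ f ∈ Γ, CondA f R 2 := by
  obtain ⟨_, A, _, Δ, _, _, -, -, -, -, -, -, hbound⟩ := id hΓ
  obtain ⟨r, hr⟩ := hΓ.exists_mul_norm_le_norm_eval (4 * (Δ + 1))
  filter_upwards [eventually_gt_atTop 0, eventually_ge_atTop (2 * r),
    eventually_ge_atTop (2 * A)] with R hR hrR hAR f hf
  obtain ⟨-, ha, -, hδ, -⟩ := hbound f hf
  refine HenonMap.condA_two (fun y hy => ?_) hR hrR (by linarith)
  calc 4 * (‖f.δ‖ + 1) * ‖y‖ ≤ 4 * (Δ + 1) * ‖y‖ := by gcongr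
    _ ≤ ‖f.p.eval y‖ := hr f hf y hy

section Orbits

variable {γ : ℤ → HenonMap} {R ρ : ℝ}

theorem eventually_fwd_notMem_closure_VMinus (hρ : 1 < ρ) (hR : 0 < R)
    (hγ : ∀ j, CondA (γ j) R ρ) (z : ℂ × ℂ) :
    ∀ᶠ n in atTop, fwd γ n z ∉ closure (VMinus R) := by
  refine eventually_notMem_of_expanding hρ hR
    (fun w hw => le_of_max_le_left (closure_VMinus_subset R hw)) fun n hn => ?_
  have := (hγ n).2 _ hn
  simp only [fwd, HenonMap.invFun_toFun] at this
  exact ⟨subset_closure this.1, this.2.le⟩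

theorem eventually_bwd_notMem_closure_VPlus (hρ : 1 < ρ) (hR : 0 < R)
    (hγ : ∀ j, CondA (γ j) R ρ) (z : ℂ × ℂ) :
    ∀ᶠ n in atTop, bwd γ n z ∉ closure (VPlus R) := by
  refine eventually_notMem_of_expanding hρ hR
    (fun w hw => le_of_max_le_left (closure_VPlus_subset R hw)) fun n hn => ?_
  have := (hγ (-((n : ℤ) + 1))).1 _ hn
  simp only [bwd, HenonMap.toFun_invFun] at this
  exact ⟨subset_closure this.1, this.2.le⟩

end Orbits

theorem stmt_3_general (Γ : Set HenonMap) (hΓ : ParamBounded Γ) :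
    ∃ R₀ : ℝ, 1 < R₀ ∧ ∀ R : ℝ, R₀ ≤ R →
      ∀ z : ℂ × ℂ, ∀ γ : ℤ → HenonMap, (∀ j : ℤ, γ j ∈ Γ) →
        ∃ n₀ : ℕ, ∀ n : ℕ, n₀ ≤ n →
          fwd γ n z ∈ (closure (VMinus R))ᶜ ∧ bwd γ n z ∈ (closure (VPlus R))ᶜ := by
  obtain ⟨R₁, hR₁⟩ := eventually_atTop.mp hΓ.eventually_condA
  refine ⟨max R₁ 2, by simp, fun R hR z γ hγ => ?_⟩
  have hR₀ : 0 < R := by linarith [le_max_right R₁ 2]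
  have hA : ∀ j, CondA (γ j) R 2 := fun j => hR₁ R (le_of_max_le_left hR) _ (hγ j)
  exact eventually_atTop.mp ((eventually_fwd_notMem_closure_VMinus one_lt_two hR₀ hA z).and
    (eventually_bwd_notMem_closure_VPlus one_lt_two hR₀ hA z))

/-- orbits eventually enter `W_R⁺ = ℂ² \ closure V_R⁻` (forward) and
`W_R⁻ = ℂ² \ closure V_R⁺` (backward). -/
theorem stmt_3 (Γ : Set HenonMap) (hne : Γ.Nonempty) (hΓ : ParamBounded Γ) :
    ∃ R₀ : ℝ, 1 < R₀ ∧ ∀ R : ℝ, R₀ ≤ R →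
      ∀ z : ℂ × ℂ, ∀ γ : ℤ → HenonMap, (∀ j : ℤ, γ j ∈ Γ) →
        ∃ n₀ : ℕ, ∀ n : ℕ, n₀ ≤ n →
          fwd γ n z ∈ (closure (VMinus R))ᶜ ∧ bwd γ n z ∈ (closure (VPlus R))ᶜ :=
  stmt_3_general Γ hΓ
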